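/- Under the same setup, if additionally ε(x) = x/λ(y(x)) is increasing on an interval [x_a, x_b] ⊆ [x^{BP}, 1], then with ε_a = ε(x_a), ε_b = ε(x_b), the area under the BP EXIT function satisfies ∫_{ε_a}^{ε_b} h^{BP}(ε) dε = (1/∫₀¹λ) · ( ε_b·∫₀^{y(x_b)} λ(u) du − ε_a·∫₀^{y(x_a)} λ(u) du − x_b·y(x_b) + x_a·y(x_a) + ∫_{x_a}^{x_b} y(x) dx ), where h^{BP}(ε(x)) = Λ(y(x)). -/

import Mathlib

/-!
Monotonicity of `ε` is all the change of variables `e = ε(x)` needs: it turns `∫ h^{BP} de`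
into `∫ Λ(y(x)) ε'(x) dx`, even where `ε` fails to be injective. Integrating by parts gives
`[Λ(y) ε] − ∫ ε · λ(y) y' / ∫₀¹λ`, and because `ε · λ(y) = x` the last integrand is
`x y'(x) / ∫₀¹λ`; a second integration by parts turns its integral into `[x y] − ∫ y`.
-/

open Polynomial

/-- Node-perspective degree distribution `Λ(u) = (∫₀ᵘ λ)/(∫₀¹ λ)`. -/
noncomputable def nodeDist (lam : Polynomial ℝ) (u : ℝ) : ℝ :=
  (∫ t in (0:ℝ)..u, lam.eval t) / (∫ t in (0:ℝ)..1, lam.eval t)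

/-- `y(x) = 1 − ρ(1−x)`. -/
noncomputable def Yfun (rho : Polynomial ℝ) (x : ℝ) : ℝ := 1 - rho.eval (1 - x)

/-- `ε(x) = x / λ(y(x))`. -/
noncomputable def epsFun (lam rho : Polynomial ℝ) (x : ℝ) : ℝ :=
  x / lam.eval (Yfun rho x)

open MeasureTheory Set

namespace Polynomial

theorem eval_pos_of_coeff_nonneg {R : Type*} [Semiring R] [PartialOrder R] [IsStrictOrderedRing R]
    {p : R[X]} (hp : ∀ k, 0 ≤ p.coeff k) (hp0 : p ≠ 0) {x : R} (hx : 0 < x) : 0 < p.eval x := by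
  rw [eval_eq_sum_range]
  have hlead : 0 < p.leadingCoeff := (hp _).lt_of_ne' (leadingCoeff_ne_zero.mpr hp0)
  exact (mul_pos hlead (pow_pos hx _)).trans_le <| Finset.single_le_sum
    (fun k _ => mul_nonneg (hp k) (pow_nonneg hx.le k)) (Finset.self_mem_range_succ _)

theorem strictMonoOn_eval_of_coeff_nonneg {p : ℝ[X]} (hp : ∀ k, 0 ≤ p.coeff k)
    (hd : 1 ≤ p.natDegree) : StrictMonoOn p.eval (Ici 0) := by
  have hp' : ∀ k, 0 ≤ p.derivative.coeff k := fun k => by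
    rw [coeff_derivative]; have := hp (k + 1); positivity
  have hd' : p.derivative ≠ 0 := fun h => by
    have := derivative_eq_zero.mp h; omega
  refine strictMonoOn_of_deriv_pos (convex_Ici 0) p.continuous.continuousOn fun x hx => ?_
  rw [interior_Ici] at hx
  rw [Polynomial.deriv]
  exact eval_pos_of_coeff_nonneg hp' hd' hx

end Polynomial

theorem Yfun_pos {rho : ℝ[X]} (hrc : ∀ k, 0 ≤ rho.coeff k) (hr1 : rho.eval 1 = 1)
    (hrd : 1 ≤ rho.natDegree) {x : ℝ} (hx0 : 0 < x) (hx1 : x ≤ 1) : 0 < Yfun rho x := by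
  have := strictMonoOn_eval_of_coeff_nonneg hrc hrd (show 1 - x ∈ Ici 0 by simpa)
    (show (1 : ℝ) ∈ Ici 0 by simp) (by linarith)
  rw [Yfun]; linarith

theorem hasDerivAt_Yfun (rho : ℝ[X]) (x : ℝ) :
    HasDerivAt (Yfun rho) (rho.derivative.eval (1 - x)) x := by
  have := ((rho.hasDerivAt (1 - x)).comp x ((hasDerivAt_id x).const_sub 1)).const_sub 1
  simp only [mul_neg, mul_one, neg_neg] at this
  exact this

theorem hasDerivAt_nodeDist_comp_Yfun (lam rho : ℝ[X]) (x : ℝ) :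
    HasDerivAt (fun x => nodeDist lam (Yfun rho x))
      (lam.eval (Yfun rho x) * rho.derivative.eval (1 - x) / ∫ t in (0:ℝ)..1, lam.eval t) x := by
  have hF : HasDerivAt (fun u => ∫ t in (0:ℝ)..u, lam.eval t) (lam.eval (Yfun rho x))
      (Yfun rho x) :=
    intervalIntegral.integral_hasDerivAt_right (lam.continuous.intervalIntegrable _ _)
      (lam.continuous.stronglyMeasurableAtFilter _ _) lam.continuous.continuousAt
  exact (hF.comp x (hasDerivAt_Yfun rho x)).div_const _

theorem isOpen_setOf_eval_Yfun_ne_zero (lam rho : ℝ[X]) :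
    IsOpen {x | lam.eval (Yfun rho x) ≠ 0} := by
  unfold Yfun; exact isOpen_ne_fun (by fun_prop) continuous_const

theorem contDiffOn_epsFun (lam rho : ℝ[X]) (n : WithTop ℕ∞) :
    ContDiffOn ℝ n (epsFun lam rho) {x | lam.eval (Yfun rho x) ≠ 0} := by
  have hpoly (p : ℝ[X]) : ContDiff ℝ n p.eval := by simpa using p.contDiff_aeval (𝕜 := ℝ) n
  unfold epsFun Yfun
  exact contDiffOn_id.div ((hpoly lam).comp
    (contDiff_const.sub ((hpoly rho).comp (contDiff_const.sub contDiff_id)))).contDiffOn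
    fun x hx => hx

namespace intervalIntegral

theorem integral_eq_integral_deriv_smul_of_monotoneOn {E : Type*} [NormedAddCommGroup E]
    [NormedSpace ℝ E] {a b : ℝ} {f f' : ℝ → ℝ} {h : ℝ → E} (hab : a ≤ b)
    (hf : ∀ x ∈ Icc a b, HasDerivWithinAt f (f' x) (Icc a b) x)
    (hmono : MonotoneOn f (Icc a b)) :
    ∫ e in f a..f b, h e = ∫ x in a..b, f' x • h (f x) := by
  have hcont : ContinuousOn f (Icc a b) := fun x hx => (hf x hx).continuousWithinAt
  rw [integral_of_le (hmono (left_mem_Icc.2 hab) (right_mem_Icc.2 hab) hab), integral_of_le hab,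
    ← integral_Icc_eq_integral_Ioc, ← integral_Icc_eq_integral_Ioc,
    ← hcont.image_Icc_of_monotoneOn hab hmono,
    integral_image_eq_integral_deriv_smul_of_monotoneOn measurableSet_Icc hf hmono]

theorem integral_eq_sub_integral_deriv_mul_of_monotoneOn {a b : ℝ} {f f' g g' h : ℝ → ℝ}
    (hab : a ≤ b) (hf : ∀ x ∈ Icc a b, HasDerivAt f (f' x) x)
    (hf' : IntervalIntegrable f' volume a b) (hmono : MonotoneOn f (Icc a b))
    (hg : ∀ x ∈ Icc a b, HasDerivAt g (g' x) x) (hg' : IntervalIntegrable g' volume a b)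
    (hhg : ∀ x ∈ Icc a b, h (f x) = g x) :
    ∫ e in f a..f b, h e = g b * f b - g a * f a - ∫ x in a..b, g' x * f x := by
  rw [integral_eq_integral_deriv_smul_of_monotoneOn hab
    (fun x hx => (hf x hx).hasDerivWithinAt) hmono]
  rw [← uIcc_of_le hab] at hf hg hhg
  rw [← integral_mul_deriv_eq_deriv_mul hg hf hg' hf']
  refine integral_congr fun x hx => ?_
  rw [smul_eq_mul, hhg x hx, mul_comm]

end intervalIntegral

open intervalIntegral

theorem integral_deriv_nodeDist_comp_Yfun_mul_epsFun (lam rho : ℝ[X]) {xa xb : ℝ}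
    (hne : ∀ x ∈ uIcc xa xb, lam.eval (Yfun rho x) ≠ 0) :
    ∫ x in xa..xb, lam.eval (Yfun rho x) * rho.derivative.eval (1 - x) /
        (∫ t in (0:ℝ)..1, lam.eval t) * epsFun lam rho x =
      (xb * Yfun rho xb - xa * Yfun rho xa - ∫ x in xa..xb, Yfun rho x) /
        ∫ t in (0:ℝ)..1, lam.eval t := by
  have hibp : ∫ x in xa..xb, x * rho.derivative.eval (1 - x) =
      xb * Yfun rho xb - xa * Yfun rho xa - ∫ x in xa..xb, 1 * Yfun rho x :=
    integral_mul_deriv_eq_deriv_mul (fun x _ => hasDerivAt_id x)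
      (fun x _ => hasDerivAt_Yfun rho x) intervalIntegrable_const
      ((by fun_prop : Continuous fun x => rho.derivative.eval (1 - x)).intervalIntegrable _ _)
  simp only [one_mul] at hibp
  rw [← hibp, ← intervalIntegral.integral_div]
  refine integral_congr fun x hx => ?_
  simp only [epsFun]
  field_simp [hne x hx]

theorem exit_integration_by_parts_two_general (lam rho : Polynomial ℝ)
    (hlc : ∀ k, 0 ≤ lam.coeff k) (hrc : ∀ k, 0 ≤ rho.coeff k)
    (hr1 : rho.eval 1 = 1)
    (hld : 1 ≤ lam.natDegree) (hrd : 1 ≤ rho.natDegree)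
    (xa xb : ℝ) (hxa : 0 < xa) (hab : xa ≤ xb) (hxb : xb ≤ 1)
    (hmono : MonotoneOn (epsFun lam rho) (Set.Icc xa xb))
    (hBP : ℝ → ℝ)
    (hBPdef : ∀ x ∈ Set.Icc xa xb, hBP (epsFun lam rho x) = nodeDist lam (Yfun rho x)) :
    (∫ e in (epsFun lam rho xa)..(epsFun lam rho xb), hBP e) =
      (1 / ∫ t in (0:ℝ)..1, lam.eval t) *
        (epsFun lam rho xb * (∫ u in (0:ℝ)..(Yfun rho xb), lam.eval u) -
          epsFun lam rho xa * (∫ u in (0:ℝ)..(Yfun rho xa), lam.eval u) -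
          xb * Yfun rho xb + xa * Yfun rho xa + ∫ x in xa..xb, Yfun rho x) := by
  have hne : ∀ x ∈ Icc xa xb, lam.eval (Yfun rho x) ≠ 0 := fun x hx =>
    (eval_pos_of_coeff_nonneg hlc (ne_zero_of_natDegree_gt hld)
      (Yfun_pos hrc hr1 hrd (hxa.trans_le hx.1) (hx.2.trans hxb))).ne'
  have hU := isOpen_setOf_eval_Yfun_ne_zero lam rho
  have hε := contDiffOn_epsFun lam rho 1
  have hε' : ∀ x ∈ Icc xa xb, HasDerivAt (epsFun lam rho) (deriv (epsFun lam rho) x) x :=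
    fun x hx =>
      ((hε.differentiableOn one_ne_zero).differentiableAt (hU.mem_nhds (hne x hx))).hasDerivAt
  rw [integral_eq_sub_integral_deriv_mul_of_monotoneOn hab hε'
    (((hε.continuousOn_deriv_of_isOpen hU le_rfl).mono hne).intervalIntegrable_of_Icc hab) hmono
    (fun x _ => hasDerivAt_nodeDist_comp_Yfun lam rho x)
    ((by unfold Yfun; fun_prop : Continuous _).intervalIntegrable _ _) hBPdef,
    integral_deriv_nodeDist_comp_Yfun_mul_epsFun lam rho (by rwa [uIcc_of_le hab])]
  simp only [nodeDist]
  ring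

/-- Second integration trick: if `ε(x)` is increasing on `[x_a,x_b] ⊆ (0,1]` and
`h^{BP}` is the BP EXIT function there (`h^{BP}(ε(x)) = Λ(y(x))`), then
`∫_{ε_a}^{ε_b} h^{BP}(ε) dε = (1/∫₀¹λ)·(ε_b ∫₀^{y(x_b)}λ − ε_a ∫₀^{y(x_a)}λ
− x_b y(x_b) + x_a y(x_a) + ∫_{x_a}^{x_b} y)`. -/
theorem exit_integration_by_parts_two (lam rho : Polynomial ℝ)
    (hlc : ∀ k, 0 ≤ lam.coeff k) (hrc : ∀ k, 0 ≤ rho.coeff k)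
    (hl1 : lam.eval 1 = 1) (hr1 : rho.eval 1 = 1) (hl0 : lam.coeff 0 = 0)
    (hld : 1 ≤ lam.natDegree) (hrd : 1 ≤ rho.natDegree)
    (xa xb : ℝ) (hxa : 0 < xa) (hab : xa ≤ xb) (hxb : xb ≤ 1)
    (hmono : MonotoneOn (epsFun lam rho) (Set.Icc xa xb))
    (hBP : ℝ → ℝ)
    (hBPdef : ∀ x ∈ Set.Icc xa xb, hBP (epsFun lam rho x) = nodeDist lam (Yfun rho x)) :
    (∫ e in (epsFun lam rho xa)..(epsFun lam rho xb), hBP e) =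
      (1 / ∫ t in (0:ℝ)..1, lam.eval t) *
        (epsFun lam rho xb * (∫ u in (0:ℝ)..(Yfun rho xb), lam.eval u) -
          epsFun lam rho xa * (∫ u in (0:ℝ)..(Yfun rho xa), lam.eval u) -
          xb * Yfun rho xb + xa * Yfun rho xa + ∫ x in xa..xb, Yfun rho x) :=
  exit_integration_by_parts_two_general lam rho hlc hrc hr1 hld hrd xa xb hxa hab hxb hmono hBP
    hBPdef
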